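/- arXiv:1710.04547 — 2 statements merged into one kernel-verified Lean document; each statement's English description precedes it below -/
import Mathlib

section
/- The function u(t,x) defined on [0,1]×ℝ by u(t,x) = 0 if x ≤ -1 or x ≥ t, u(t,x) = (x+1)/(2t) if -1 ≤ x ≤ 2t-1, and u(t,x) = 1 if 2t-1 ≤ x ≤ t, is a distributional solution of the Burgers-type equation ∂_t u + ∂_x(u^2) = 0 with initial datum ū = 1 on (-1,0) and ū = 0 elsewhere. -/
open MeasureTheory
open Set Function

namespace Stmt9Aux

noncomputable def F (t x : ℝ) : ℝ :=
  if x ≤ -1 ∨ t ≤ x then 0 else if x ≤ 2*t - 1 then (x+1)/(2*t) else 1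

noncomputable def Hf (φ : ℝ → ℝ → ℝ) (p : ℝ × ℝ) : ℝ :=
  if -1 < p.2 ∧ p.2 < 2*p.1 - 1 ∧ p.1 < 1 then (p.2+1)/(2*p.1^2) * φ p.1 p.2 else 0

section
variable {φ : ℝ → ℝ → ℝ}

lemma F_abs_le_one (t x : ℝ) : |F t x| ≤ 1 := by
  unfold F
  split_ifs with h1 h2
  · simp
  · push_neg at h1
    have hx : (0:ℝ) < x + 1 := by linarith [h1.1]
    have h2t : x + 1 ≤ 2 * t := by linarith
    have ht : (0:ℝ) < 2 * t := lt_of_lt_of_le hx h2t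
    rw [abs_of_nonneg (le_of_lt (div_pos hx ht))]
    exact (div_le_one ht).2 h2t
  · simp

lemma measurable_F : Measurable (uncurry F) := by
  unfold F uncurry
  apply Measurable.ite
  · exact (measurableSet_le measurable_snd measurable_const).union
      (measurableSet_le measurable_fst measurable_snd)
  · exact measurable_const
  · apply Measurable.ite
    · exact measurableSet_le measurable_snd (by fun_prop)
    · exact (measurable_snd.add_const 1).div (measurable_fst.const_mul 2)
    · exact measurable_const

lemma hasDerivAt_x' (hφ : ContDiff ℝ (⊤ : ℕ∞) (uncurry φ)) (t x : ℝ) :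
    HasDerivAt (fun y => φ t y) (fderiv ℝ (uncurry φ) (t, x) (0, 1)) x :=
  (hφ.differentiable (by simp) (t, x)).hasFDerivAt.comp_hasDerivAt x
    ((hasDerivAt_const x t).prodMk (hasDerivAt_id x))

lemma cont_psix (hφ : ContDiff ℝ (⊤ : ℕ∞) (uncurry φ)) (t : ℝ) :
    Continuous (fun x => fderiv ℝ (uncurry φ) (t, x) (0, 1)) :=
  (((hφ.continuous_fderiv (by simp)).clm_apply continuous_const).comp
    (continuous_const.prodMk continuous_id))

lemma Mslice (hφ : ContDiff ℝ (⊤ : ℕ∞) (uncurry φ)) {t : ℝ} (ht : t ∈ Ioo (0:ℝ) 1) :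
    ∫ x, F t x ^ 2 * fderiv ℝ (uncurry φ) (t, x) (0, 1)
      = φ t t - ∫ x in (-1:ℝ)..(2*t-1), (x+1)/(2*t^2) * φ t x := by
  obtain ⟨ht0, ht1⟩ := ht
  set ψ : ℝ → ℝ := fun x => fderiv ℝ (uncurry φ) (t, x) (0, 1) with hψ
  have hψcont : Continuous ψ := cont_psix hφ t
  have hψd : ∀ x : ℝ, HasDerivAt (fun y => φ t y) (ψ x) x := fun x => hasDerivAt_x' hφ t x
  have hmid : (-1:ℝ) < 2*t-1 := by linarith
  have hmid2 : 2*t-1 < t := by linarith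
  -- interval integrability of the full integrand on any interval
  have hii : ∀ a b : ℝ, IntervalIntegrable (fun x => F t x ^ 2 * ψ x) volume a b := by
    intro a b
    rw [intervalIntegrable_iff]
    refine Integrable.mono' (g := fun x => ‖ψ x‖)
      ((hψcont.norm.continuousOn.integrableOn_compact isCompact_uIcc).mono_set
        Set.uIoc_subset_uIcc) ?_ ?_
    · exact (((measurable_F.comp (measurable_const.prodMk
        measurable_id)).pow_const 2).mul hψcont.measurable).aestronglyMeasurable
    · filter_upwards with x
      rw [norm_mul, Real.norm_eq_abs (F t x ^ 2)]
      have : |F t x ^ 2| ≤ 1 := by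
        rw [abs_pow]
        exact pow_le_one₀ (abs_nonneg _) (F_abs_le_one t x)
      nlinarith [norm_nonneg (ψ x)]
  -- restrict to Ioo (-1) t
  have h0 : (fun x => F t x ^ 2 * ψ x) = (Ioo (-1:ℝ) t).indicator (fun x => F t x ^ 2 * ψ x) := by
    funext x
    by_cases hx : x ∈ Ioo (-1:ℝ) t
    · rw [indicator_of_mem hx]
    · rw [indicator_of_notMem hx]
      have : F t x = 0 := by
        unfold F
        rw [if_pos]
        by_cases h : x ≤ -1
        · exact Or.inl h
        · refine Or.inr ?_
          push_neg at h
          by_contra h2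
          push_neg at h2
          exact hx ⟨by linarith, by linarith⟩
      show F t x ^ 2 * ψ x = 0
      rw [this]; ring
  rw [h0, integral_indicator measurableSet_Ioo, ← integral_Ioc_eq_integral_Ioo,
    ← intervalIntegral.integral_of_le (by linarith : (-1:ℝ) ≤ t),
    ← intervalIntegral.integral_add_adjacent_intervals (hii (-1) (2*t-1)) (hii (2*t-1) t)]
  -- second piece
  have hp2 : ∫ x in (2*t-1)..t, F t x ^ 2 * ψ x = φ t t - φ t (2*t-1) := by
    have e1 : ∫ x in (2*t-1)..t, F t x ^ 2 * ψ x = ∫ x in (2*t-1)..t, ψ x := by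
      rw [intervalIntegral.integral_of_le (by linarith : 2*t-1 ≤ t),
        intervalIntegral.integral_of_le (by linarith : 2*t-1 ≤ t),
        integral_Ioc_eq_integral_Ioo, integral_Ioc_eq_integral_Ioo]
      apply setIntegral_congr_fun measurableSet_Ioo
      intro x hx
      have : F t x = 1 := by
        unfold F
        rw [if_neg, if_neg] <;> push_neg
        · linarith [hx.1, hx.2]
        · constructor <;> linarith [hx.1, hx.2]
      show F t x ^ 2 * ψ x = ψ x
      rw [this]; ring
    rw [e1]
    exact intervalIntegral.integral_eq_sub_of_hasDerivAt (fun x _ => hψd x)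
      (hψcont.intervalIntegrable _ _)
  -- first piece
  have hp1 : ∫ x in (-1:ℝ)..(2*t-1), F t x ^ 2 * ψ x
      = φ t (2*t-1) - ∫ x in (-1:ℝ)..(2*t-1), (x+1)/(2*t^2) * φ t x := by
    have e1 : ∫ x in (-1:ℝ)..(2*t-1), F t x ^ 2 * ψ x
        = ∫ x in (-1:ℝ)..(2*t-1), ((x+1)/(2*t))^2 * ψ x := by
      rw [intervalIntegral.integral_of_le (by linarith : (-1:ℝ) ≤ 2*t-1),
        intervalIntegral.integral_of_le (by linarith : (-1:ℝ) ≤ 2*t-1),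
        integral_Ioc_eq_integral_Ioo, integral_Ioc_eq_integral_Ioo]
      apply setIntegral_congr_fun measurableSet_Ioo
      intro x hx
      have : F t x = (x+1)/(2*t) := by
        unfold F
        rw [if_neg, if_pos (by linarith [hx.2])]
        push_neg
        constructor <;> linarith [hx.1, hx.2]
      show F t x ^ 2 * ψ x = ((x + 1) / (2 * t)) ^ 2 * ψ x
      rw [this]
    rw [e1]
    have hIBP := intervalIntegral.integral_mul_deriv_eq_deriv_mul
      (u := fun x : ℝ => ((x+1)/(2*t))^2) (u' := fun x : ℝ => (x+1)/(2*t^2))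
      (v := fun y : ℝ => φ t y) (v' := ψ)
      (a := (-1:ℝ)) (b := 2*t-1)
      (fun x _ => by
        have h := (((hasDerivAt_id' x).add_const 1).div_const (2*t)).fun_pow 2
        convert h using 1
        norm_num
        have ht' : t ≠ 0 := ht0.ne'
        field_simp)
      (fun x _ => hψd x)
      (by
        apply Continuous.intervalIntegrable
        fun_prop)
      (hψcont.intervalIntegrable _ _)
    beta_reduce at hIBP
    rw [hIBP]
    have hu1 : ((2*t-1+1)/(2*t))^2 = 1 := by
      rw [div_pow, div_eq_one_iff_eq (by positivity)]
      ring
    have hu2 : (((-1:ℝ)+1)/(2*t))^2 = 0 := by norm_num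
    rw [hu1, hu2]
    ring
  rw [hp1, hp2]
  ring

lemma hasDerivAt_t' (hφ : ContDiff ℝ (⊤ : ℕ∞) (uncurry φ)) (t x : ℝ) :
    HasDerivAt (fun s => φ s x) (fderiv ℝ (uncurry φ) (t, x) (1, 0)) t := by
  have h := (hφ.differentiable (by simp) (t, x)).hasFDerivAt.comp_hasDerivAt t
    ((hasDerivAt_id' t).prodMk (hasDerivAt_const t x))
  exact h

lemma cont_psit (hφ : ContDiff ℝ (⊤ : ℕ∞) (uncurry φ)) (x : ℝ) :
    Continuous (fun t => fderiv ℝ (uncurry φ) (t, x) (1, 0)) :=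
  (((hφ.continuous_fderiv (by simp)).clm_apply continuous_const).comp
    (continuous_id.prodMk continuous_const))

lemma Jslice (hφ : ContDiff ℝ (⊤ : ℕ∞) (uncurry φ))
    (h1 : ∀ t x, (1:ℝ) ≤ t → φ t x = 0) {x : ℝ} (hx : x ∈ Ioo (-1:ℝ) 1) :
    ∫ t in Ioo (0:ℝ) 1, F t x * fderiv ℝ (uncurry φ) (t, x) (1, 0)
      = -(φ (max x 0) x) + ∫ t in ((x+1)/2)..1, (x+1)/(2*t^2) * φ t x := by
  obtain ⟨hx1, hx2⟩ := hx
  set ψ : ℝ → ℝ := fun t => fderiv ℝ (uncurry φ) (t, x) (1, 0) with hψdef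
  have hψcont : Continuous ψ := cont_psit hφ x
  have hψd : ∀ t : ℝ, HasDerivAt (fun s => φ s x) (ψ t) t := fun t => hasDerivAt_t' hφ t x
  set m : ℝ := max x 0 with hm
  set s : ℝ := (x+1)/2 with hs
  have hm0 : 0 ≤ m := le_max_right x 0
  have hms : m < s := max_lt (by simp only [hs]; linarith) (by simp only [hs]; linarith)
  have hs1 : s < 1 := by simp only [hs]; linarith
  have hs0 : 0 < s := lt_of_le_of_lt hm0 hms
  have hmx : x ≤ m := le_max_left x 0
  have hii : ∀ a b : ℝ, IntervalIntegrable (fun t => F t x * ψ t) volume a b := by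
    intro a b
    rw [intervalIntegrable_iff]
    refine Integrable.mono' (g := fun t => ‖ψ t‖)
      ((hψcont.norm.continuousOn.integrableOn_compact isCompact_uIcc).mono_set
        Set.uIoc_subset_uIcc) ?_ ?_
    · exact ((measurable_F.comp (measurable_id.prodMk
        measurable_const)).mul hψcont.measurable).aestronglyMeasurable
    · filter_upwards with t
      rw [norm_mul, Real.norm_eq_abs (F t x)]
      nlinarith [norm_nonneg (ψ t), F_abs_le_one t x]
  rw [← integral_Ioc_eq_integral_Ioo,
    ← intervalIntegral.integral_of_le (by norm_num : (0:ℝ) ≤ 1),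
    ← intervalIntegral.integral_add_adjacent_intervals (hii 0 m) (hii m 1),
    ← intervalIntegral.integral_add_adjacent_intervals (hii m s) (hii s 1)]
  -- piece 1 : ∫_0^m = 0
  have hp1 : ∫ t in (0:ℝ)..m, F t x * ψ t = 0 := by
    rw [intervalIntegral.integral_of_le hm0, integral_Ioc_eq_integral_Ioo]
    rw [setIntegral_congr_fun measurableSet_Ioo
      (g := fun _ => (0:ℝ)) ?_, integral_zero]
    intro t ht
    have htm : t < m := ht.2
    have hm_eq : m = x := by
      rcases max_cases x 0 with ⟨h, _⟩ | ⟨h, hle⟩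
      · exact h
      · exfalso; rw [hm] at htm; rw [h] at htm; exact absurd ht.1 (by linarith)
    show F t x * ψ t = 0
    have : F t x = 0 := by
      unfold F; rw [if_pos (Or.inr (by linarith [hm_eq ▸ htm]))]
    rw [this]; ring
  -- piece 2 : ∫_m^s = φ s x - φ m x
  have hp2 : ∫ t in m..s, F t x * ψ t = φ s x - φ m x := by
    have e1 : ∫ t in m..s, F t x * ψ t = ∫ t in m..s, ψ t := by
      rw [intervalIntegral.integral_of_le hms.le, intervalIntegral.integral_of_le hms.le,
        integral_Ioc_eq_integral_Ioo, integral_Ioc_eq_integral_Ioo]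
      apply setIntegral_congr_fun measurableSet_Ioo
      intro t ht
      show F t x * ψ t = ψ t
      have : F t x = 1 := by
        unfold F
        rw [if_neg, if_neg]
        · push_neg
          have : t < s := ht.2
          simp only [hs] at this
          linarith
        · push_neg
          constructor
          · linarith
          · linarith [lt_of_le_of_lt hmx ht.1]
      rw [this]; ring
    rw [e1]
    exact intervalIntegral.integral_eq_sub_of_hasDerivAt (fun t _ => hψd t)
      (hψcont.intervalIntegrable _ _)
  -- piece 3
  have hp3 : ∫ t in s..1, F t x * ψ t
      = -(φ s x) + ∫ t in s..1, (x+1)/(2*t^2) * φ t x := by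
    have e1 : ∫ t in s..1, F t x * ψ t
        = ∫ t in s..1, ((x+1)/2 * t⁻¹) * ψ t := by
      rw [intervalIntegral.integral_of_le hs1.le, intervalIntegral.integral_of_le hs1.le,
        integral_Ioc_eq_integral_Ioo, integral_Ioc_eq_integral_Ioo]
      apply setIntegral_congr_fun measurableSet_Ioo
      intro t ht
      have hts : s < t := ht.1
      have ht0 : 0 < t := lt_trans hs0 hts
      show F t x * ψ t = (x+1)/2 * t⁻¹ * ψ t
      have : F t x = (x+1)/2 * t⁻¹ := by
        unfold F
        rw [if_neg, if_pos]
        · field_simp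
        · simp only [hs] at hts; linarith
        · push_neg
          constructor
          · linarith
          · linarith [lt_of_le_of_lt hmx (lt_of_lt_of_le hms hts.le)]
      rw [this]
    rw [e1]
    have hIBP := intervalIntegral.integral_mul_deriv_eq_deriv_mul
      (u := fun t : ℝ => (x+1)/2 * t⁻¹) (u' := fun t : ℝ => (x+1)/2 * (-(t^2)⁻¹))
      (v := fun t : ℝ => φ t x) (v' := ψ) (a := s) (b := 1)
      (fun t htm => by
        have ht0 : (0:ℝ) < t := by
          rcases htm with ⟨hl, _⟩
          rw [min_eq_left hs1.le] at hl
          linarith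
        exact (hasDerivAt_inv (ne_of_gt ht0)).const_mul ((x+1)/2))
      (fun t _ => hψd t)
      (by
        apply ContinuousOn.intervalIntegrable
        apply ContinuousOn.mul continuousOn_const
        apply ContinuousOn.neg
        apply ContinuousOn.inv₀ (continuous_pow 2).continuousOn
        intro t htm
        rw [uIcc_of_le hs1.le] at htm
        exact pow_ne_zero 2 (ne_of_gt (lt_of_lt_of_le hs0 htm.1)))
      (hψcont.intervalIntegrable _ _)
    beta_reduce at hIBP
    rw [hIBP]
    have hu1 : (x+1)/2 * (1:ℝ)⁻¹ * φ 1 x = 0 := by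
      rw [h1 1 x le_rfl]; ring
    have hu2 : (x+1)/2 * s⁻¹ = 1 := by
      rw [hs]
      exact mul_inv_cancel₀ (by positivity)
    have e2 : ∫ t in s..1, (x+1)/2 * (-(t^2)⁻¹) * φ t x
        = -∫ t in s..1, (x+1)/(2*t^2) * φ t x := by
      rw [← intervalIntegral.integral_neg]
      rw [intervalIntegral.integral_of_le hs1.le, intervalIntegral.integral_of_le hs1.le,
        integral_Ioc_eq_integral_Ioo, integral_Ioc_eq_integral_Ioo]
      apply setIntegral_congr_fun measurableSet_Ioo
      intro t ht
      have ht0 : 0 < t := lt_trans hs0 ht.1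
      show (x+1)/2 * (-(t^2)⁻¹) * φ t x = -((x+1)/(2*t^2) * φ t x)
      field_simp
    rw [hu1, hu2, e2]
    ring
  rw [hp1, hp2, hp3]
  ring

lemma integrable_psi (hφ : ContDiff ℝ (⊤ : ℕ∞) (uncurry φ))
    (hsupp : HasCompactSupport (uncurry φ)) (v : ℝ × ℝ) :
    Integrable (fun p : ℝ × ℝ => fderiv ℝ (uncurry φ) p v) volume := by
  have hc : Continuous (fun p : ℝ × ℝ => fderiv ℝ (uncurry φ) p v) :=
    (hφ.continuous_fderiv (by simp)).clm_apply continuous_const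
  have hcs : HasCompactSupport (fun p : ℝ × ℝ => fderiv ℝ (uncurry φ) p v) :=
    (hsupp.fderiv ℝ).comp_left (g := fun L : ℝ × ℝ →L[ℝ] ℝ => L v) rfl
  exact hc.integrable_of_hasCompactSupport hcs

lemma integrable_mul_psi (hφ : ContDiff ℝ (⊤ : ℕ∞) (uncurry φ))
    (hsupp : HasCompactSupport (uncurry φ)) (v : ℝ × ℝ)
    (m : ℝ × ℝ → ℝ) (hm : Measurable m) (hb : ∀ p, |m p| ≤ 1) (S : Set ℝ) :
    Integrable (fun p : ℝ × ℝ => m p * fderiv ℝ (uncurry φ) p v)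
      ((volume.restrict S).prod volume) := by
  have hprod : (volume.restrict S).prod (volume : Measure ℝ)
      = ((volume : Measure ℝ).prod volume).restrict (S ×ˢ univ) := by
    rw [← Measure.prod_restrict, Measure.restrict_univ]
  have hΨ : Integrable (fun p : ℝ × ℝ => fderiv ℝ (uncurry φ) p v)
      ((volume.restrict S).prod volume) := by
    rw [hprod]
    exact ((integrable_psi hφ hsupp v).mono_measure
      (by rw [← Measure.volume_eq_prod]; exact Measure.restrict_le_self))
  refine hΨ.norm.mono' ?_ ?_
  · exact (hm.mul (((hφ.continuous_fderiv (by simp)).clm_apply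
      continuous_const).measurable)).aestronglyMeasurable
  · filter_upwards with p
    rw [norm_mul]
    calc ‖m p‖ * ‖fderiv ℝ (uncurry φ) p v‖
        ≤ 1 * ‖fderiv ℝ (uncurry φ) p v‖ := by
          apply mul_le_mul_of_nonneg_right (hb p) (norm_nonneg _)
      _ = ‖fderiv ℝ (uncurry φ) p v‖ := one_mul _

lemma measurable_Hf (hφ : ContDiff ℝ (⊤ : ℕ∞) (uncurry φ)) : Measurable (Hf φ) := by
  unfold Hf
  apply Measurable.ite
  · apply MeasurableSet.inter
    · exact measurableSet_lt measurable_const measurable_snd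
    · exact (measurableSet_lt measurable_snd (by fun_prop)).inter
        (measurableSet_lt measurable_fst measurable_const)
  · exact ((measurable_snd.add_const 1).div (by fun_prop)).mul
      hφ.continuous.measurable
  · exact measurable_const

lemma Hf_zero_t {t : ℝ} (ht : t ∉ Ioo (0:ℝ) 1) (x : ℝ) : Hf φ (t, x) = 0 := by
  unfold Hf
  rw [if_neg]
  rintro ⟨h1, h2, h3⟩
  exact ht ⟨by simp at h1 h2 ⊢; linarith, h3⟩

lemma Hf_zero_x {x : ℝ} (hx : x ∉ Ioo (-1:ℝ) 1) (t : ℝ) : Hf φ (t, x) = 0 := by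
  unfold Hf
  rw [if_neg]
  rintro ⟨h1, h2, h3⟩
  exact hx ⟨h1, by simp at h2 h3 ⊢; linarith⟩

lemma Hf_fun_t {t : ℝ} (ht : t ∈ Ioo (0:ℝ) 1) :
    (fun x => Hf φ (t, x))
      = (Ioo (-1:ℝ) (2*t-1)).indicator (fun x => (x+1)/(2*t^2) * φ t x) := by
  funext x
  by_cases hx : x ∈ Ioo (-1:ℝ) (2*t-1)
  · rw [indicator_of_mem hx]
    exact if_pos ⟨hx.1, hx.2, ht.2⟩
  · rw [indicator_of_notMem hx]
    unfold Hf; rw [if_neg]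
    rintro ⟨h1, h2, _⟩
    exact hx ⟨h1, h2⟩

lemma Hf_fun_x {x : ℝ} (hx : x ∈ Ioo (-1:ℝ) 1) :
    (fun t => Hf φ (t, x))
      = (Ioo ((x+1)/2) 1).indicator (fun t => (x+1)/(2*t^2) * φ t x) := by
  funext t
  by_cases ht : t ∈ Ioo ((x+1)/2) 1
  · rw [indicator_of_mem ht]
    refine if_pos ⟨hx.1, by simp at ht ⊢; constructor <;> [linarith [ht.1]; exact ht.2]⟩
  · rw [indicator_of_notMem ht]
    unfold Hf; rw [if_neg]
    rintro ⟨_, h2, h3⟩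
    simp at h2 h3
    exact ht ⟨by linarith, h3⟩

lemma Hf_int_t (ht : (t : ℝ) ∈ Ioo (0:ℝ) 1) :
    ∫ x, Hf φ (t, x) = ∫ x in (-1:ℝ)..(2*t-1), (x+1)/(2*t^2) * φ t x := by
  rw [Hf_fun_t ht, integral_indicator measurableSet_Ioo,
    intervalIntegral.integral_of_le (by linarith [ht.1] : (-1:ℝ) ≤ 2*t-1),
    integral_Ioc_eq_integral_Ioo]

lemma Hf_int_x {x : ℝ} (hx : x ∈ Ioo (-1:ℝ) 1) :
    ∫ t, Hf φ (t, x) = ∫ t in ((x+1)/2)..1, (x+1)/(2*t^2) * φ t x := by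
  rw [Hf_fun_x hx, integral_indicator measurableSet_Ioo,
    intervalIntegral.integral_of_le (by linarith [hx.2] : (x+1)/2 ≤ 1),
    integral_Ioc_eq_integral_Ioo]

lemma integrable_Hf (hφ : ContDiff ℝ (⊤ : ℕ∞) (uncurry φ))
    (hsupp : HasCompactSupport (uncurry φ)) :
    Integrable (Hf φ) (volume : Measure (ℝ × ℝ)) := by
  obtain ⟨C, hC⟩ := hsupp.exists_bound_of_continuous hφ.continuous
  have hC0 : 0 ≤ C := le_trans (norm_nonneg _) (hC (0,0))
  have hbound : ∀ t x, |Hf φ (t, x)| ≤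
      (Ioo (-1:ℝ) (2*t-1)).indicator (fun _ => C / t) x := by
    intro t x
    unfold Hf
    split_ifs with h
    · obtain ⟨h1, h2, _⟩ := h
      have hx1 : (-1:ℝ) < x := h1
      have hx2 : x < 2*t-1 := h2
      have ht0 : (0:ℝ) < t := by linarith
      have hxm : x ∈ Ioo (-1:ℝ) (2*t-1) := ⟨h1, h2⟩
      rw [indicator_of_mem hxm]
      rw [abs_mul, abs_div]
      have e1 : |x + 1| = x + 1 := abs_of_pos (by linarith)
      have e2 : |2 * t ^ 2| = 2 * t ^ 2 := abs_of_pos (by positivity)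
      rw [e1, e2]
      have : (x+1) / (2*t^2) * |φ t x| ≤ (x+1)/(2*t^2) * C :=
        mul_le_mul_of_nonneg_left (le_trans (le_abs_self _) (by
          simpa using hC (t, x)))
          (le_of_lt (div_pos (by linarith) (by positivity)))
      refine le_trans this ?_
      rw [div_mul_eq_mul_div, div_le_div_iff₀ (by positivity) ht0]
      nlinarith [mul_le_mul_of_nonneg_right (show x + 1 ≤ 2*t by linarith)
        (mul_nonneg hC0 ht0.le)]
    · simp only [abs_zero]
      by_cases hx : x ∈ Ioo (-1:ℝ) (2*t-1)
      · rw [indicator_of_mem hx]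
        have ht0 : (0:ℝ) < t := by obtain ⟨a,b⟩ := hx; linarith
        positivity
      · rw [indicator_of_notMem hx]
  have hmeas := measurable_Hf (φ := φ) hφ
  have hA : AEStronglyMeasurable (Hf φ) ((volume : Measure ℝ).prod volume) := by
    rw [← Measure.volume_eq_prod]; exact hmeas.aestronglyMeasurable
  rw [Measure.volume_eq_prod]
  rw [integrable_prod_iff hA]
  have hslice : ∀ t : ℝ, Integrable (fun x => Hf φ (t, x)) volume := by
    intro t
    have hg : Integrable ((Ioo (-1:ℝ) (2*t-1)).indicator (fun _ => C / t)) volume :=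
      (integrableOn_const measure_Ioo_lt_top.ne).integrable_indicator
        measurableSet_Ioo
    refine hg.mono' ((hmeas.comp
      (measurable_const.prodMk measurable_id)).aestronglyMeasurable) ?_
    filter_upwards with x
    rw [Real.norm_eq_abs]
    exact hbound t x
  constructor
  · filter_upwards with t
    exact hslice t
  · have hg : Integrable ((Ioo (0:ℝ) 1).indicator (fun _ => 2*C)) volume :=
      (integrableOn_const measure_Ioo_lt_top.ne).integrable_indicator
        measurableSet_Ioo
    refine hg.mono' (hA.norm.integral_prod_right') ?_
    filter_upwards with t
    by_cases ht : t ∈ Ioo (0:ℝ) 1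
    · have hnn : 0 ≤ ∫ x, ‖Hf φ (t, x)‖ := integral_nonneg fun x => norm_nonneg _
      rw [Real.norm_eq_abs, abs_of_nonneg hnn, indicator_of_mem ht]
      have hmono : ∫ x, ‖Hf φ (t, x)‖
          ≤ ∫ x, (Ioo (-1:ℝ) (2*t-1)).indicator (fun _ => C / t) x := by
        refine integral_mono (hslice t).norm ((integrableOn_const
          measure_Ioo_lt_top.ne).integrable_indicator measurableSet_Ioo) ?_
        intro x
        simp only [Real.norm_eq_abs]
        exact hbound t x
      refine le_trans hmono ?_
      rw [integral_indicator_const _ measurableSet_Ioo, measureReal_def, Real.volume_Ioo, smul_eq_mul,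
        ENNReal.toReal_ofReal (by linarith [ht.1] : (0:ℝ) ≤ 2*t-1 - -1)]
      have ht0 : (0:ℝ) < t := ht.1
      rw [div_eq_mul_inv]
      calc (2*t-1 - -1) * (C * t⁻¹) = (t * t⁻¹) * (2*C) := by ring
        _ = 2*C := by rw [mul_inv_cancel₀ (ne_of_gt ht0), one_mul]
      linarith
    · have : ∀ x : ℝ, Hf φ (t, x) = 0 := Hf_zero_t ht
      simp only [this, norm_zero, integral_zero, Real.norm_eq_abs, abs_zero]
      exact indicator_apply_nonneg (fun _ => by linarith)

end

end Stmt9Aux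

open Stmt9Aux

/-- The function `u(t,x)` on `[0,1] × ℝ` given by `u = 0` for `x ≤ -1` or `x ≥ t`,
`u = (x+1)/(2t)` for `-1 ≤ x ≤ 2t-1`, and `u = 1` for `2t-1 ≤ x ≤ t`, is a distributional
solution of `∂_t u + ∂_x(u²) = 0` with initial datum `ū = 𝟙_{(-1,0)}`: for every test
function `φ ∈ C_c^∞(ℝ²)` (supported in `t < 1`, since `u` is only prescribed on `[0,1] × ℝ`),
`∫_0^∞ ∫ u ∂_t φ + ∫_0^∞ ∫ u² ∂_x φ + ∫ φ(0,·) ū = 0`. -/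
theorem stmt9
    (u : ℝ → ℝ → ℝ)
    (hu : ∀ t ∈ Set.Icc (0:ℝ) 1, ∀ x : ℝ,
      u t x = if x ≤ -1 ∨ t ≤ x then 0 else if x ≤ 2*t - 1 then (x+1)/(2*t) else 1)
    (ubar : ℝ → ℝ)
    (hubar : ∀ x, ubar x = if -1 < x ∧ x < 0 then 1 else 0) :
    ∀ φ : ℝ → ℝ → ℝ, ContDiff ℝ (⊤ : ℕ∞) (Function.uncurry φ) →
      HasCompactSupport (Function.uncurry φ) →
      (∀ t x, (1:ℝ) ≤ t → φ t x = 0) →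
      (∫ t in Set.Ioi (0:ℝ), ∫ x : ℝ, u t x * deriv (fun s => φ s x) t) +
        (∫ t in Set.Ioi (0:ℝ), ∫ x : ℝ, (u t x)^2 * deriv (fun y => φ t y) x) +
        (∫ x : ℝ, φ 0 x * ubar x) = 0 := by
  intro φ hφ hsupp h1
  have hdt : ∀ t x : ℝ, deriv (fun s => φ s x) t = fderiv ℝ (uncurry φ) (t, x) (1, 0) :=
    fun t x => (hasDerivAt_t' hφ t x).deriv
  have hdx : ∀ t x : ℝ, deriv (fun y => φ t y) x = fderiv ℝ (uncurry φ) (t, x) (0, 1) :=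
    fun t x => (hasDerivAt_x' hφ t x).deriv
  have hH := integrable_Hf hφ hsupp
  have hHprod : Integrable (Hf φ) ((volume : Measure ℝ).prod volume) := by
    rwa [Measure.volume_eq_prod] at hH
  -- the marginal functions of Hf
  have hMarg_t : Integrable (fun t => ∫ x, Hf φ (t, x)) volume :=
    hHprod.integral_prod_left
  have hMarg_x : Integrable (fun x => ∫ t, Hf φ (t, x)) volume :=
    hHprod.swap.integral_prod_left
  ----------------------------------------------------------------
  -- Term 1
  ----------------------------------------------------------------
  have hT1 : (∫ t in Set.Ioi (0:ℝ), ∫ x : ℝ, u t x * deriv (fun s => φ s x) t)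
      = -((∫ x in Ioc (-1:ℝ) 0, φ 0 x) + (∫ x in Ioc (0:ℝ) 1, φ x x))
        + ∫ t in Ioo (0:ℝ) 1, ∫ x, Hf φ (t, x) := by
    have step1 : (∫ t in Set.Ioi (0:ℝ), ∫ x : ℝ, u t x * deriv (fun s => φ s x) t)
        = ∫ t in Set.Ioi (0:ℝ), (Ioo (0:ℝ) 1).indicator
            (fun t => ∫ x, F t x * fderiv ℝ (uncurry φ) (t, x) (1, 0)) t := by
      apply setIntegral_congr_ae measurableSet_Ioi
      filter_upwards [compl_mem_ae_iff.mpr (measure_singleton (1:ℝ))] with t ht1 htIoi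
      have htne : t ≠ 1 := ht1
      by_cases hlt : t < 1
      · have htm : t ∈ Ioo (0:ℝ) 1 := ⟨htIoi, hlt⟩
        rw [indicator_of_mem htm]
        apply integral_congr_ae
        filter_upwards with x
        rw [hu t ⟨le_of_lt htIoi, le_of_lt hlt⟩ x, hdt t x]
        rfl
      · rw [indicator_of_notMem (fun hmem => hlt hmem.2)]
        have hz : ∀ x : ℝ, deriv (fun s => φ s x) t = 0 := by
          intro x
          have hgt : 1 < t := lt_of_le_of_ne (not_lt.1 hlt) (Ne.symm htne)
          have hev : (fun s => φ s x) =ᶠ[nhds t] (fun _ => 0) := by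
            filter_upwards [isOpen_Ioi.mem_nhds hgt] with s hs
            exact h1 s x (le_of_lt hs)
          rw [hev.deriv_eq]
          exact deriv_const t 0
        simp [hz]
    rw [step1, setIntegral_indicator measurableSet_Ioo,
      inter_eq_right.mpr Ioo_subset_Ioi_self]
    have hswap := integral_integral_swap
      (f := fun t x => F t x * fderiv ℝ (uncurry φ) (t, x) (1, 0))
      (μ := volume.restrict (Ioo (0:ℝ) 1)) (ν := volume)
      (integrable_mul_psi hφ hsupp (1, 0) (fun p => F p.1 p.2) (measurable_F)
        (fun p => F_abs_le_one p.1 p.2) (Ioo (0:ℝ) 1))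
    rw [hswap]
    have step2 : (∫ x : ℝ, ∫ t in Ioo (0:ℝ) 1, F t x * fderiv ℝ (uncurry φ) (t, x) (1, 0))
        = ∫ x : ℝ, (Ioo (-1:ℝ) 1).indicator
            (fun x => -(φ (max x 0) x) + ∫ t in ((x+1)/2)..1, (x+1)/(2*t^2) * φ t x) x := by
      apply integral_congr_ae
      filter_upwards with x
      by_cases hxm : x ∈ Ioo (-1:ℝ) 1
      · rw [indicator_of_mem hxm]
        exact Jslice hφ h1 hxm
      · rw [indicator_of_notMem hxm]
        rw [setIntegral_congr_fun measurableSet_Ioo (g := fun _ => (0:ℝ)) ?_, integral_zero]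
        intro t ht
        show F t x * fderiv ℝ (uncurry φ) (t, x) (1, 0) = 0
        have hF0 : F t x = 0 := by
          unfold F
          rw [if_pos]
          by_cases hle : x ≤ -1
          · exact Or.inl hle
          · push_neg at hle
            have : (1:ℝ) ≤ x := by
              by_contra hcon
              push_neg at hcon
              exact hxm ⟨hle, hcon⟩
            exact Or.inr (le_trans (le_of_lt ht.2) this)
        rw [hF0, zero_mul]
      -- (no more goals expected here)
    rw [step2, integral_indicator measurableSet_Ioo]
    -- integrability of the two summands
    have hGcont : Continuous (fun x : ℝ => φ (max x 0) x) := by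
      have : (fun x : ℝ => φ (max x 0) x)
          = (uncurry φ) ∘ (fun x : ℝ => (max x 0, x)) := rfl
      rw [this]
      exact hφ.continuous.comp ((continuous_id.max continuous_const).prodMk continuous_id)
    have hGint : IntegrableOn (fun x : ℝ => φ (max x 0) x) (Ioo (-1:ℝ) 1) volume :=
      (hGcont.continuousOn.integrableOn_compact isCompact_Icc).mono_set Ioo_subset_Icc_self
    have hKint : IntegrableOn
        (fun x => ∫ t in ((x+1)/2)..1, (x+1)/(2*t^2) * φ t x) (Ioo (-1:ℝ) 1) volume :=
      (hMarg_x.integrableOn).congr_fun (fun x hx => Hf_int_x hx) measurableSet_Ioo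
    have hGneg : IntegrableOn (fun x : ℝ => -(φ (max x 0) x)) (Ioo (-1:ℝ) 1) volume :=
      hGint.neg
    rw [integral_add hGneg hKint, integral_neg]
    -- first summand
    have hGsplit : (∫ x in Ioo (-1:ℝ) 1, φ (max x 0) x)
        = (∫ x in Ioc (-1:ℝ) 0, φ 0 x) + (∫ x in Ioc (0:ℝ) 1, φ x x) := by
      rw [setIntegral_congr_set Ioo_ae_eq_Ioc,
        ← Ioc_union_Ioc_eq_Ioc (by norm_num : (-1:ℝ) ≤ 0) (by norm_num : (0:ℝ) ≤ 1),
        setIntegral_union (Ioc_disjoint_Ioc_of_le le_rfl) measurableSet_Ioc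
          ((hGcont.continuousOn.integrableOn_compact isCompact_Icc).mono_set
            Ioc_subset_Icc_self)
          ((hGcont.continuousOn.integrableOn_compact isCompact_Icc).mono_set
            Ioc_subset_Icc_self)]
      congr 1
      · apply setIntegral_congr_fun measurableSet_Ioc
        intro x hx
        show φ (max x 0) x = φ 0 x
        rw [max_eq_right hx.2]
      · apply setIntegral_congr_fun measurableSet_Ioc
        intro x hx
        show φ (max x 0) x = φ x x
        rw [max_eq_left (le_of_lt hx.1)]
    -- second summand
    have hKeq : (∫ x in Ioo (-1:ℝ) 1, ∫ t in ((x+1)/2)..1, (x+1)/(2*t^2) * φ t x)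
        = ∫ t in Ioo (0:ℝ) 1, ∫ x, Hf φ (t, x) := by
      rw [setIntegral_congr_fun measurableSet_Ioo
        (fun x hx => (Hf_int_x (φ := φ) hx).symm)]
      have e1 : (∫ x in Ioo (-1:ℝ) 1, ∫ t, Hf φ (t, x)) = ∫ x, ∫ t, Hf φ (t, x) := by
        rw [← integral_indicator measurableSet_Ioo]
        apply integral_congr_ae
        filter_upwards with x
        by_cases hxm : x ∈ Ioo (-1:ℝ) 1
        · rw [indicator_of_mem hxm]
        · rw [indicator_of_notMem hxm]
          simp [Hf_zero_x hxm]
      have e2 : (∫ x : ℝ, ∫ t, Hf φ (t, x)) = ∫ t : ℝ, ∫ x, Hf φ (t, x) :=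
        integral_integral_swap (f := fun x t => Hf φ (t, x)) hHprod.swap
      have e3 : (∫ t : ℝ, ∫ x, Hf φ (t, x)) = ∫ t in Ioo (0:ℝ) 1, ∫ x, Hf φ (t, x) := by
        rw [← integral_indicator measurableSet_Ioo]
        apply integral_congr_ae
        filter_upwards with t
        by_cases htm : t ∈ Ioo (0:ℝ) 1
        · rw [indicator_of_mem htm]
        · rw [indicator_of_notMem htm]
          simp [Hf_zero_t htm]
      rw [e1, e2, e3]
    rw [hGsplit, hKeq]
  ----------------------------------------------------------------
  -- Term 2
  ----------------------------------------------------------------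
  have hT2 : (∫ t in Set.Ioi (0:ℝ), ∫ x : ℝ, (u t x)^2 * deriv (fun y => φ t y) x)
      = (∫ t in Ioo (0:ℝ) 1, φ t t) - ∫ t in Ioo (0:ℝ) 1, ∫ x, Hf φ (t, x) := by
    have step1 : (∫ t in Set.Ioi (0:ℝ), ∫ x : ℝ, (u t x)^2 * deriv (fun y => φ t y) x)
        = ∫ t in Set.Ioi (0:ℝ), (Ioo (0:ℝ) 1).indicator
            (fun t => ∫ x, F t x ^ 2 * fderiv ℝ (uncurry φ) (t, x) (0, 1)) t := by
      apply setIntegral_congr_fun measurableSet_Ioi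
      intro t htIoi
      by_cases hlt : t < 1
      · have htm : t ∈ Ioo (0:ℝ) 1 := ⟨htIoi, hlt⟩
        show (∫ x : ℝ, (u t x)^2 * deriv (fun y => φ t y) x)
          = (Ioo (0:ℝ) 1).indicator
            (fun t => ∫ x, F t x ^ 2 * fderiv ℝ (uncurry φ) (t, x) (0, 1)) t
        rw [indicator_of_mem htm]
        apply integral_congr_ae
        filter_upwards with x
        rw [hu t ⟨le_of_lt htIoi, le_of_lt hlt⟩ x, hdx t x]
        rfl
      · show (∫ x : ℝ, (u t x)^2 * deriv (fun y => φ t y) x)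
          = (Ioo (0:ℝ) 1).indicator
            (fun t => ∫ x, F t x ^ 2 * fderiv ℝ (uncurry φ) (t, x) (0, 1)) t
        rw [indicator_of_notMem (fun hmem => hlt hmem.2)]
        have hz : ∀ x : ℝ, deriv (fun y => φ t y) x = 0 := by
          intro x
          have : (fun y => φ t y) = (fun _ : ℝ => (0:ℝ)) := by
            funext y
            exact h1 t y (not_lt.1 hlt)
          rw [this]
          exact deriv_const x 0
        simp [hz]
    rw [step1, setIntegral_indicator measurableSet_Ioo,
      inter_eq_right.mpr Ioo_subset_Ioi_self]
    rw [setIntegral_congr_fun measurableSet_Ioo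
      (g := fun t => φ t t - ∫ x in (-1:ℝ)..(2*t-1), (x+1)/(2*t^2) * φ t x)
      (fun t ht => Mslice hφ ht)]
    have hDiag : IntegrableOn (fun t : ℝ => φ t t) (Ioo (0:ℝ) 1) volume := by
      have hc : Continuous (fun t : ℝ => φ t t) := by
        have : (fun t : ℝ => φ t t) = (uncurry φ) ∘ (fun t : ℝ => (t, t)) := rfl
        rw [this]
        exact hφ.continuous.comp (continuous_id.prodMk continuous_id)
      exact (hc.continuousOn.integrableOn_compact isCompact_Icc).mono_set Ioo_subset_Icc_self
    have hMint : IntegrableOn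
        (fun t => ∫ x in (-1:ℝ)..(2*t-1), (x+1)/(2*t^2) * φ t x) (Ioo (0:ℝ) 1) volume :=
      (hMarg_t.integrableOn).congr_fun (fun t ht => Hf_int_t ht) measurableSet_Ioo
    rw [integral_sub hDiag hMint]
    congr 1
    apply setIntegral_congr_fun measurableSet_Ioo
    intro t ht
    exact (Hf_int_t ht).symm
  ----------------------------------------------------------------
  -- Term 3
  ----------------------------------------------------------------
  have hT3 : (∫ x : ℝ, φ 0 x * ubar x) = ∫ x in Ioo (-1:ℝ) 0, φ 0 x := by
    have : (fun x : ℝ => φ 0 x * ubar x) = (Ioo (-1:ℝ) 0).indicator (fun x => φ 0 x) := by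
      funext x
      by_cases hxm : x ∈ Ioo (-1:ℝ) 0
      · rw [indicator_of_mem hxm, hubar x, if_pos ⟨hxm.1, hxm.2⟩, mul_one]
      · rw [indicator_of_notMem hxm, hubar x, if_neg, mul_zero]
        intro hcon
        exact hxm ⟨hcon.1, hcon.2⟩
    rw [this, integral_indicator measurableSet_Ioo]
  ----------------------------------------------------------------
  rw [hT1, hT2, hT3]
  have e1 : (∫ x in Ioc (-1:ℝ) 0, φ 0 x) = ∫ x in Ioo (-1:ℝ) 0, φ 0 x :=
    setIntegral_congr_set Ioo_ae_eq_Ioc.symm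
  have e2 : (∫ x in Ioc (0:ℝ) 1, φ x x) = ∫ t in Ioo (0:ℝ) 1, φ t t :=
    setIntegral_congr_set Ioo_ae_eq_Ioc.symm
  rw [e1, e2]
  ring
end

section
/- For the explicit entropy solution u(t,·) of Burgers' equation with datum 𝟙_{(-1,0)} (u(t,x) = (x+1)/(2t) on [-1, 2t-1], u = 1 on [2t-1, t], u = 0 elsewhere), the entropy functional satisfies ∫_ℝ u(t,x) ln u(t,x) dx < 0 for every t ∈ (0,1], while ∫_ℝ ū ln ū dx = 0 for the initial datum ū = 𝟙_{(-1,0)}. -/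
open MeasureTheory

/-- For the explicit entropy solution `u(t,·)` of Burgers' equation with datum
`ū = 𝟙_{(-1,0)}`, the entropy functional satisfies `∫ u(t,x) ln u(t,x) dx < 0` for every
`t ∈ (0,1]`, while `∫ ū ln ū dx = 0`. (Here `s ln s` is extended by `0` at `s = 0`, which
is automatic since `Real.log 0 = 0`.) -/
theorem stmt11
    (u : ℝ → ℝ → ℝ)
    (hu : ∀ t ∈ Set.Ioc (0:ℝ) 1, ∀ x : ℝ,
      u t x = if x ≤ -1 ∨ t ≤ x then 0 else if x ≤ 2*t - 1 then (x+1)/(2*t) else 1)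
    (ubar : ℝ → ℝ)
    (hubar : ∀ x, ubar x = if -1 < x ∧ x < 0 then 1 else 0) :
    (∀ t ∈ Set.Ioc (0:ℝ) 1, ∫ x : ℝ, u t x * Real.log (u t x) < 0) ∧
      ∫ x : ℝ, ubar x * Real.log (ubar x) = 0 := by
  constructor
  · intro t ht
    obtain ⟨ht0, ht1⟩ := ht
    have hform := hu t ⟨ht0, ht1⟩
    set f : ℝ → ℝ := fun x => u t x * Real.log (u t x) with hf
    -- u takes values in [0,1]
    have hmem : ∀ x, 0 ≤ u t x ∧ u t x ≤ 1 := by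
      intro x
      rw [hform x]
      split_ifs with h1 h2
      · norm_num
      · push_neg at h1
        obtain ⟨hx1, hx2⟩ := h1
        constructor
        · apply div_nonneg <;> linarith
        · rw [div_le_one (by linarith)]; linarith
      · norm_num
    -- f ≤ 0 everywhere
    have hnonpos : ∀ x, f x ≤ 0 := by
      intro x
      obtain ⟨h0, h1⟩ := hmem x
      exact mul_nonpos_of_nonneg_of_nonpos h0 (Real.log_nonpos h0 h1)
    -- f is bounded by 1
    have hbound : ∀ x, ‖f x‖ ≤ 1 := by
      intro x
      obtain ⟨h0, h1⟩ := hmem x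
      rw [Real.norm_eq_abs, abs_le]
      refine ⟨?_, by linarith [hnonpos x]⟩
      rcases eq_or_lt_of_le h0 with h | h
      · simp [hf, ← h]
      · have hlog : Real.log (u t x)⁻¹ ≤ (u t x)⁻¹ - 1 :=
          Real.log_le_sub_one_of_pos (inv_pos.2 h)
        rw [Real.log_inv] at hlog
        have hinv : u t x * (u t x)⁻¹ = 1 := mul_inv_cancel₀ (ne_of_gt h)
        have key : u t x * -Real.log (u t x) ≤ u t x * ((u t x)⁻¹ - 1) :=
          mul_le_mul_of_nonneg_left hlog h0
        have hfx : f x = u t x * Real.log (u t x) := rfl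
        nlinarith [key, hinv, hfx]
    -- measurability
    have hmeasu : Measurable (u t) := by
      have : u t = fun x => if x ≤ -1 ∨ t ≤ x then (0:ℝ)
          else if x ≤ 2*t - 1 then (x+1)/(2*t) else 1 := funext hform
      rw [this]
      apply Measurable.ite
      · exact (measurableSet_le measurable_id measurable_const).union
          (measurableSet_le measurable_const measurable_id)
      · exact measurable_const
      · exact Measurable.ite (measurableSet_le measurable_id measurable_const)
          ((measurable_id.add_const 1).div_const _) measurable_const
    have hmeasf : Measurable f := hmeasu.mul (Real.measurable_log.comp hmeasu)
    -- support of f is contained in Icc (-1) t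
    have hsupp : Function.support f ⊆ Set.Icc (-1) t := by
      intro x hx
      by_contra hmem'
      apply hx
      have : x ≤ -1 ∨ t ≤ x := by
        simp only [Set.mem_Icc, not_and_or, not_le] at hmem'
        rcases hmem' with h | h
        · exact Or.inl h.le
        · exact Or.inr h.le
      simp [hf, hform x, if_pos this]
    -- integrability
    have hint : Integrable f := by
      rw [← Set.indicator_eq_self.2 hsupp]
      refine (Measure.integrableOn_of_bounded measure_Icc_lt_top.ne
        hmeasf.aestronglyMeasurable (ae_of_all _ hbound)).integrable_indicator
        measurableSet_Icc
    -- f is strictly negative on Ioo (-1) (2t-1)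
    have hneg : ∀ x ∈ Set.Ioo (-1 : ℝ) (2*t - 1), f x < 0 := by
      intro x hx
      obtain ⟨hx1, hx2⟩ := hx
      have hcond : ¬(x ≤ -1 ∨ t ≤ x) := by push_neg; constructor <;> linarith
      have hval : u t x = (x+1)/(2*t) := by rw [hform x, if_neg hcond, if_pos (le_of_lt hx2)]
      have hpos : 0 < u t x := by rw [hval]; apply div_pos <;> linarith
      have hlt1 : u t x < 1 := by rw [hval, div_lt_one (by linarith)]; linarith
      exact mul_neg_of_pos_of_neg hpos (Real.log_neg hpos hlt1)
    -- conclude via the positive part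
    have hg : 0 < ∫ x : ℝ, -f x := by
      rw [integral_pos_iff_support_of_nonneg (fun x => neg_nonneg.2 (hnonpos x)) hint.neg]
      refine lt_of_lt_of_le ?_ (measure_mono (show Set.Ioo (-1:ℝ) (2*t-1) ⊆
        Function.support fun x => -f x from fun x hx => by
          simpa using ne_of_lt (hneg x hx)))
      rw [Real.volume_Ioo]
      exact ENNReal.ofReal_pos.2 (by linarith)
    rw [integral_neg] at hg
    linarith
  · have : (fun x => ubar x * Real.log (ubar x)) = fun _ => 0 := by
      funext x
      rw [hubar x]
      split_ifs <;> simp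
    rw [this, integral_zero]
end
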